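/- arXiv:2511.01421 — 5 statements merged into one kernel-verified Lean document; each statement's English description precedes it below -/
import Mathlib

section
/- (Claim 2 / backward direction of Proposition 1.) For a given incentive profile u, if a feasible flow f is a Wardrop equilibrium (c_p(f,u) ≤ c_q(f,u) for all paths p, q with f_p > 0), then f minimizes the potential Φ(·,u) over the feasible set F. -/
open Set MeasureTheory intervalIntegral

section RoutingGame

variable {E V P : Type*} [Fintype E] [Fintype V] [Fintype P] [Nonempty P]
  [DecidableEq E] [DecidableEq V]

/-- Edge flow: total flow of paths containing edge `e`. -/
noncomputable def edgeFlow (pathE : P → Finset E) (f : P → ℝ) (e : E) : ℝ :=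
  ∑ p ∈ Finset.univ.filter (fun p => e ∈ pathE p), f p

/-- Node flow: total flow of paths containing node `v`. -/
noncomputable def nodeFlow (pathV : P → Finset V) (f : P → ℝ) (v : V) : ℝ :=
  ∑ p ∈ Finset.univ.filter (fun p => v ∈ pathV p), f p

/-- Feasible flows: nonnegative, summing to one. -/
def Feasible (f : P → ℝ) : Prop := (∀ p, 0 ≤ f p) ∧ ∑ p, f p = 1

/-- Path cost with additive path-specific node incentives. -/
noncomputable def pathCost (pathE : P → Finset E) (pathV : P → Finset V)
    (ce : E → ℝ → ℝ) (cv : V → ℝ → ℝ) (u : V → P → ℝ) (f : P → ℝ) (p : P) : ℝ :=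
  (∑ e ∈ pathE p, ce e (edgeFlow pathE f e)) +
  (∑ v ∈ pathV p, (cv v (nodeFlow pathV f v) + u v p))

/-- Wardrop equilibrium: every used path has minimal cost. -/
def IsWardrop (pathE : P → Finset E) (pathV : P → Finset V)
    (ce : E → ℝ → ℝ) (cv : V → ℝ → ℝ) (u : V → P → ℝ) (f : P → ℝ) : Prop :=
  ∀ p q : P, 0 < f p →
    pathCost pathE pathV ce cv u f p ≤ pathCost pathE pathV ce cv u f q

/-- The potential function `Φ(f,u)`. -/
noncomputable def potential (pathE : P → Finset E) (pathV : P → Finset V)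
    (ce : E → ℝ → ℝ) (cv : V → ℝ → ℝ) (u : V → P → ℝ) (f : P → ℝ) : ℝ :=
  (∑ e, ∫ s in (0:ℝ)..(edgeFlow pathE f e), ce e s) +
  (∑ v, ∫ s in (0:ℝ)..(nodeFlow pathV f v), cv v s) +
  (∑ p, f p * ∑ v ∈ pathV p, u v p)

/-- Social cost. -/
noncomputable def socialCost (pathE : P → Finset E) (pathV : P → Finset V)
    (ce : E → ℝ → ℝ) (cv : V → ℝ → ℝ) (u : V → P → ℝ) (f : P → ℝ) : ℝ :=
  ∑ p, f p * pathCost pathE pathV ce cv u f p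

end RoutingGame

/-! The potential is convex, being a sum of antiderivatives of nondecreasing costs plus a linear
term, and its gradient at `f` is the vector of path costs `c_p(f,u)`. Hence
`Φ(g) ≥ Φ(f) + ∑_p (g_p - f_p) c_p(f,u)`, and the Wardrop condition says exactly that `f`
puts all its mass on cost-minimal paths, so `∑_p f_p c_p(f,u) ≤ ∑_p g_p c_p(f,u)`. -/

open Finset

theorem MonotoneOn.mul_sub_le_integral {c : ℝ → ℝ} {a b : ℝ} (hc : MonotoneOn c (uIcc a b)) :
    c a * (b - a) ≤ ∫ x in a..b, c x := by
  rcases le_total a b with hab | hba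
  · have hmono : ∫ _ in a..b, c a ≤ ∫ x in a..b, c x :=
      integral_mono_on hab intervalIntegrable_const hc.intervalIntegrable fun x hx =>
        hc left_mem_uIcc (Icc_subset_uIcc hx) hx.1
    simpa [mul_comm] using hmono
  · have hmono : ∫ x in b..a, c x ≤ ∫ _ in b..a, c a :=
      integral_mono_on hba hc.intervalIntegrable.symm intervalIntegrable_const fun x hx =>
        hc (Icc_subset_uIcc' hx) left_mem_uIcc hx.2
    rw [integral_symm]
    simp only [intervalIntegral.integral_const, smul_eq_mul] at hmono
    linarith

theorem MonotoneOn.integral_add_mul_sub_le {c : ℝ → ℝ} {s : Set ℝ} [hs : s.OrdConnected]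
    (hc : MonotoneOn c s) {x₀ a b : ℝ} (h₀ : x₀ ∈ s) (ha : a ∈ s) (hb : b ∈ s) :
    (∫ x in x₀..a, c x) + c a * (b - a) ≤ ∫ x in x₀..b, c x := by
  have hint : ∀ {y z}, y ∈ s → z ∈ s → IntervalIntegrable c volume y z := fun hy hz =>
    (hc.mono (hs.uIcc_subset hy hz)).intervalIntegrable
  rw [← integral_add_adjacent_intervals (hint h₀ ha) (hint ha hb)]
  have := (hc.mono (hs.uIcc_subset ha hb)).mul_sub_le_integral
  linarith

section Flows

variable {α P : Type*} [Fintype α] [Fintype P] [DecidableEq α]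

theorem Feasible.sum_mem_Icc {f : P → ℝ} (hf : Feasible f) (S : Finset P) :
    ∑ p ∈ S, f p ∈ Set.Icc (0 : ℝ) 1 :=
  ⟨sum_nonneg fun p _ => hf.1 p,
    hf.2 ▸ sum_le_sum_of_subset_of_nonneg (subset_univ S) fun p _ _ => hf.1 p⟩

theorem sum_mul_sum_filter_mem (path : P → Finset α) (w : α → ℝ) (h : P → ℝ) :
    ∑ a, w a * ∑ p ∈ univ.filter (fun p => a ∈ path p), h p =
      ∑ p, h p * ∑ a ∈ path p, w a := by
  simp_rw [mul_sum, sum_filter]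
  rw [sum_comm]
  refine sum_congr rfl fun p _ => ?_
  rw [← sum_filter, filter_univ_mem]
  exact sum_congr rfl fun a _ => mul_comm _ _

theorem Feasible.sum_mul_le_sum_mul {f g C : P → ℝ} (hf : Feasible f) (hg : Feasible g)
    (hC : ∀ p q, 0 < f p → C p ≤ C q) : ∑ p, f p * C p ≤ ∑ p, g p * C p :=
  calc ∑ p, f p * C p = ∑ p, ∑ q, f p * g q * C p := by
        simp_rw [mul_right_comm _ _ (C _), ← mul_sum, hg.2, mul_one]
    _ ≤ ∑ p, ∑ q, f p * g q * C q := sum_le_sum fun p _ => sum_le_sum fun q _ => by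
        rcases (hf.1 p).eq_or_lt with hp | hp
        · simp [← hp]
        · exact mul_le_mul_of_nonneg_left (hC p q hp) (mul_nonneg hp.le (hg.1 q))
    _ = ∑ q, g q * C q := by
        rw [sum_comm]
        refine sum_congr rfl fun q _ => ?_
        rw [← sum_mul, ← sum_mul, hf.2, one_mul]

end Flows

section Potential

variable {E V P : Type*} [Fintype E] [Fintype V] [Fintype P] [DecidableEq E] [DecidableEq V]
  (pathE : P → Finset E) (pathV : P → Finset V) (ce : E → ℝ → ℝ) (cv : V → ℝ → ℝ)
  (u : V → P → ℝ)

theorem sum_mul_pathCost (f h : P → ℝ) :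
    ∑ p, h p * pathCost pathE pathV ce cv u f p =
      ∑ e, ce e (edgeFlow pathE f e) * edgeFlow pathE h e +
      ∑ v, cv v (nodeFlow pathV f v) * nodeFlow pathV h v +
      ∑ p, h p * ∑ v ∈ pathV p, u v p := by
  simp only [edgeFlow, nodeFlow, sum_mul_sum_filter_mem, ← sum_add_distrib, pathCost]
  refine sum_congr rfl fun p _ => ?_
  rw [sum_add_distrib]
  ring

theorem potential_add_sum_sub_mul_pathCost_le
    (hce : ∀ e, MonotoneOn (ce e) (Set.Icc 0 1)) (hcv : ∀ v, MonotoneOn (cv v) (Set.Icc 0 1))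
    {f g : P → ℝ} (hf : Feasible f) (hg : Feasible g) :
    potential pathE pathV ce cv u f + ∑ p, (g p - f p) * pathCost pathE pathV ce cv u f p ≤
      potential pathE pathV ce cv u g := by
  have h0 : (0 : ℝ) ∈ Set.Icc 0 1 := left_mem_Icc.2 zero_le_one
  have hE : ∀ e, (∫ x in 0..edgeFlow pathE f e, ce e x) +
      ce e (edgeFlow pathE f e) * (edgeFlow pathE g e - edgeFlow pathE f e) ≤
      ∫ x in 0..edgeFlow pathE g e, ce e x := fun e =>
    (hce e).integral_add_mul_sub_le h0 (hf.sum_mem_Icc _) (hg.sum_mem_Icc _)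
  have hV : ∀ v, (∫ x in 0..nodeFlow pathV f v, cv v x) +
      cv v (nodeFlow pathV f v) * (nodeFlow pathV g v - nodeFlow pathV f v) ≤
      ∫ x in 0..nodeFlow pathV g v, cv v x := fun v =>
    (hcv v).integral_add_mul_sub_le h0 (hf.sum_mem_Icc _) (hg.sum_mem_Icc _)
  have hE_sub : ∀ e, edgeFlow pathE (g - f) e = edgeFlow pathE g e - edgeFlow pathE f e :=
    fun e => sum_sub_distrib _ _
  have hV_sub : ∀ v, nodeFlow pathV (g - f) v = nodeFlow pathV g v - nodeFlow pathV f v :=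
    fun v => sum_sub_distrib _ _
  have hlin := sum_mul_pathCost pathE pathV ce cv u f (g - f)
  simp only [Pi.sub_apply, hE_sub, hV_sub] at hlin
  have hsumE := sum_le_sum (s := Finset.univ) fun e _ => hE e
  have hsumV := sum_le_sum (s := Finset.univ) fun v _ => hV v
  rw [sum_add_distrib] at hsumE hsumV
  rw [hlin, potential, potential]
  simp only [sub_mul, sum_sub_distrib]
  linarith

end Potential

section RoutingGame

variable {E V P : Type*} [Fintype E] [Fintype V] [Fintype P] [Nonempty P]
  [DecidableEq E] [DecidableEq V]

theorem isWardrop_minimizes_potential_general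
    (pathE : P → Finset E) (pathV : P → Finset V)
    (ce : E → ℝ → ℝ) (cv : V → ℝ → ℝ) (u : V → P → ℝ)
    (hce_mono : ∀ e, MonotoneOn (ce e) (Set.Icc (0:ℝ) 1))
    (hcv_mono : ∀ v, MonotoneOn (cv v) (Set.Icc (0:ℝ) 1))
    (f : P → ℝ) (hf : Feasible f)
    (heq : IsWardrop pathE pathV ce cv u f) :
    ∀ g : P → ℝ, Feasible g →
      potential pathE pathV ce cv u f ≤ potential pathE pathV ce cv u g := by
  intro g hg
  have hsupport := potential_add_sum_sub_mul_pathCost_le pathE pathV ce cv u hce_mono hcv_mono hf hg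
  have hminimal := hf.sum_mul_le_sum_mul hg heq
  simp only [sub_mul, sum_sub_distrib] at hsupport
  linarith

/-- **Claim 2; backward direction of Proposition 1.** If a feasible flow is
a Wardrop equilibrium, then it minimizes the potential `Φ(·,u)` over the feasible set. -/
theorem isWardrop_minimizes_potential
    (pathE : P → Finset E) (pathV : P → Finset V)
    (ce : E → ℝ → ℝ) (cv : V → ℝ → ℝ) (u : V → P → ℝ)
    (hce_nn : ∀ e, ∀ x ∈ Set.Icc (0:ℝ) 1, 0 ≤ ce e x)
    (hce_cont : ∀ e, ContinuousOn (ce e) (Set.Icc (0:ℝ) 1))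
    (hce_mono : ∀ e, MonotoneOn (ce e) (Set.Icc (0:ℝ) 1))
    (hcv_nn : ∀ v, ∀ x ∈ Set.Icc (0:ℝ) 1, 0 ≤ cv v x)
    (hcv_cont : ∀ v, ContinuousOn (cv v) (Set.Icc (0:ℝ) 1))
    (hcv_mono : ∀ v, MonotoneOn (cv v) (Set.Icc (0:ℝ) 1))
    (f : P → ℝ) (hf : Feasible f)
    (heq : IsWardrop pathE pathV ce cv u f) :
    ∀ g : P → ℝ, Feasible g →
      potential pathE pathV ce cv u f ≤ potential pathE pathV ce cv u g :=
  isWardrop_minimizes_potential_general pathE pathV ce cv u hce_mono hcv_mono f hf heq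

end RoutingGame
end

section
/- (Proposition 1, Potential Function.) For a given incentive profile u, a feasible flow f is a Wardrop equilibrium if and only if f minimizes the potential Φ(·,u) over the feasible set F. -/
/-! The potential is convex on the feasible set, and the path costs are its gradient: for a
nondecreasing cost `c`, `(y - x) * c x ≤ ∫ s in x..y, c s`, and summing this over edges and nodes
gives `∑ p, (g p - f p) * c_p(f) ≤ Φ g - Φ f`. At a Wardrop equilibrium the left side is
nonnegative, since `f` only uses cheapest paths. Conversely, if a used path `p` costs more than
`q`, moving mass `t` from `p` to `q` yields a flow `g` with `t * (c_p(g) - c_q(g)) ≤ Φ f - Φ g`,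
and by continuity of the costs the left side is positive for small `t`. -/

open Set MeasureTheory intervalIntegral

open Finset

theorem MonotoneOn.sub_mul_le_integral {c : ℝ → ℝ} {x y : ℝ} (hc : MonotoneOn c (uIcc x y)) :
    (y - x) * c x ≤ ∫ s in x..y, c s := by
  rcases le_total x y with hxy | hyx
  · have hle : ∫ _ in x..y, c x ≤ ∫ s in x..y, c s :=
      integral_mono_on hxy intervalIntegrable_const hc.intervalIntegrable
        fun s hs => hc left_mem_uIcc (Icc_subset_uIcc hs) hs.1
    simpa using hle
  · have hle : ∫ s in y..x, c s ≤ ∫ _ in y..x, c x :=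
      integral_mono_on hyx hc.intervalIntegrable.symm intervalIntegrable_const
        fun s hs => hc (Icc_subset_uIcc' hs) left_mem_uIcc hs.2
    rw [integral_symm]
    simp only [intervalIntegral.integral_const, smul_eq_mul] at hle
    linarith

section Load

variable {P ι : Type*} [Fintype P] [DecidableEq ι]

theorem edgeFlow_mem_Icc {f : P → ℝ} (hf : Feasible f) (path : P → Finset ι) (i : ι) :
    edgeFlow path f i ∈ Icc (0 : ℝ) 1 :=
  ⟨sum_nonneg fun p _ => hf.1 p,
    hf.2 ▸ sum_le_sum_of_subset_of_nonneg (filter_subset _ _) fun p _ _ => hf.1 p⟩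

theorem edgeFlow_sub (path : P → Finset ι) (f g : P → ℝ) (i : ι) :
    edgeFlow path (g - f) i = edgeFlow path g i - edgeFlow path f i :=
  sum_sub_distrib _ _

theorem continuous_edgeFlow (path : P → Finset ι) (i : ι) :
    Continuous fun f : P → ℝ => edgeFlow path f i :=
  continuous_finsetSum _ fun p _ => continuous_apply p

theorem ContinuousOn.comp_edgeFlow {c : ℝ → ℝ} (hc : ContinuousOn c (Icc 0 1))
    (path : P → Finset ι) (i : ι) :
    ContinuousOn (fun f => c (edgeFlow path f i)) {f | Feasible f} :=
  hc.comp (continuous_edgeFlow path i).continuousOn fun _ hf => edgeFlow_mem_Icc hf path i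

variable [Fintype ι]

theorem sum_edgeFlow_mul (path : P → Finset ι) (w : P → ℝ) (a : ι → ℝ) :
    ∑ i, edgeFlow path w i * a i = ∑ p, w p * ∑ i ∈ path p, a i := by
  unfold edgeFlow
  simp_rw [sum_filter, sum_mul, mul_sum, ite_mul, zero_mul]
  rw [sum_comm]
  simp_rw [Fintype.sum_ite_mem]

-- `nodeFlow` is definitionally `edgeFlow` of the node incidence, so `edgeFlow` serves as the load
-- of either resource family.
noncomputable def loadPotential (path : P → Finset ι) (c : ι → ℝ → ℝ) (f : P → ℝ) : ℝ :=
  ∑ i, ∫ s in (0 : ℝ)..edgeFlow path f i, c i s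

theorem sum_sub_mul_le_loadPotential_sub (path : P → Finset ι) {c : ι → ℝ → ℝ}
    (hc : ∀ i, MonotoneOn (c i) (Icc 0 1)) {f g : P → ℝ} (hf : Feasible f) (hg : Feasible g) :
    ∑ p, (g p - f p) * ∑ i ∈ path p, c i (edgeFlow path f i) ≤
      loadPotential path c g - loadPotential path c f := by
  have hint : ∀ h : P → ℝ, Feasible h → ∀ i,
      IntervalIntegrable (c i) volume 0 (edgeFlow path h i) := fun h hh i =>
    ((hc i).mono (uIcc_subset_Icc ⟨le_rfl, zero_le_one⟩
      (edgeFlow_mem_Icc hh path i))).intervalIntegrable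
  calc ∑ p, (g p - f p) * ∑ i ∈ path p, c i (edgeFlow path f i)
      = ∑ i, (edgeFlow path g i - edgeFlow path f i) * c i (edgeFlow path f i) := by
        simp_rw [← edgeFlow_sub, sum_edgeFlow_mul, Pi.sub_apply]
    _ ≤ ∑ i, ∫ s in edgeFlow path f i..edgeFlow path g i, c i s :=
        sum_le_sum fun i _ => MonotoneOn.sub_mul_le_integral <|
          (hc i).mono (uIcc_subset_Icc (edgeFlow_mem_Icc hf path i) (edgeFlow_mem_Icc hg path i))
    _ = loadPotential path c g - loadPotential path c f := by
        rw [loadPotential, loadPotential, ← sum_sub_distrib]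
        exact sum_congr rfl fun i _ => (integral_interval_sub_left (hint g hg i) (hint f hf i)).symm

end Load

section Shift

variable {P : Type*} [DecidableEq P]

def shiftFlow (f : P → ℝ) (p q : P) (t : ℝ) : P → ℝ :=
  f + t • (Pi.single q 1 - Pi.single p 1)

theorem continuous_shiftFlow (f : P → ℝ) (p q : P) : Continuous (shiftFlow f p q) :=
  continuous_const.add (continuous_id.smul continuous_const)

@[simp]
theorem shiftFlow_zero (f : P → ℝ) (p q : P) : shiftFlow f p q 0 = f := by
  simp [shiftFlow]

variable [Fintype P]

theorem Feasible.shiftFlow {f : P → ℝ} (hf : Feasible f) {p q : P} (hpq : p ≠ q) {t : ℝ}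
    (ht : t ∈ Icc 0 (f p)) : Feasible (shiftFlow f p q t) := by
  refine ⟨fun r => ?_, ?_⟩
  · have := hf.1 r
    rcases eq_or_ne r p with rfl | hrp
    · simp [_root_.shiftFlow, hpq, ht.2]
    · rcases eq_or_ne r q with rfl | hrq
      · simp only [_root_.shiftFlow, Pi.add_apply, Pi.smul_apply, Pi.sub_apply, Pi.single_eq_same,
          Pi.single_eq_of_ne hrp, sub_zero, smul_eq_mul, mul_one]
        linarith [ht.1]
      · simp [_root_.shiftFlow, hrp, hrq, this]
  · simp [_root_.shiftFlow, sum_add_distrib, hf.2, ← mul_sum, sum_sub_distrib]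

theorem continuousOn_comp_shiftFlow {X : Type*} [TopologicalSpace X] {φ : (P → ℝ) → X}
    (hφ : ContinuousOn φ {g | Feasible g}) {f : P → ℝ} (hf : Feasible f) {p q : P} (hpq : p ≠ q) :
    ContinuousOn (fun t => φ (shiftFlow f p q t)) (Icc 0 (f p)) :=
  hφ.comp (continuous_shiftFlow f p q).continuousOn fun _ ht => hf.shiftFlow hpq ht

theorem sum_sub_shiftFlow_mul (f : P → ℝ) (p q : P) (t : ℝ) (a : P → ℝ) :
    ∑ r, (f r - shiftFlow f p q t r) * a r = t * (a p - a q) := by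
  simp [shiftFlow, sub_mul, mul_sub, sum_sub_distrib, Pi.single_apply]

end Shift

theorem sum_mul_le_sum_mul_of_pos_imp_le {P : Type*} [Fintype P] {f g a : P → ℝ}
    (hf : Feasible f) (hg : Feasible g) (h : ∀ p q, 0 < f p → a p ≤ a q) :
    ∑ p, f p * a p ≤ ∑ q, g q * a q :=
  calc ∑ p, f p * a p = ∑ p, ∑ q, f p * g q * a p := by
        simp_rw [← sum_mul, ← mul_sum, hg.2, mul_one]
    _ ≤ ∑ p, ∑ q, f p * g q * a q := by
        refine sum_le_sum fun p _ => sum_le_sum fun q _ => ?_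
        rcases (hf.1 p).eq_or_lt with hp | hp
        · simp [← hp]
        · exact mul_le_mul_of_nonneg_left (h p q hp) (mul_nonneg hp.le (hg.1 q))
    _ = ∑ q, g q * a q := by
        rw [sum_comm]
        simp_rw [← sum_mul, hf.2, one_mul]

section Potential

variable {E V P : Type*} [Fintype P] [DecidableEq E] [DecidableEq V]
  (pathE : P → Finset E) (pathV : P → Finset V) (ce : E → ℝ → ℝ) (cv : V → ℝ → ℝ) (u : V → P → ℝ)

theorem pathCost_eq (f : P → ℝ) (p : P) :
    pathCost pathE pathV ce cv u f p =
      ∑ e ∈ pathE p, ce e (edgeFlow pathE f e) + ∑ v ∈ pathV p, cv v (edgeFlow pathV f v) +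
        ∑ v ∈ pathV p, u v p := by
  rw [pathCost, sum_add_distrib, add_assoc]
  rfl

theorem continuousOn_pathCost (hce : ∀ e, ContinuousOn (ce e) (Icc 0 1))
    (hcv : ∀ v, ContinuousOn (cv v) (Icc 0 1)) (p : P) :
    ContinuousOn (fun f => pathCost pathE pathV ce cv u f p) {f | Feasible f} :=
  (continuousOn_finsetSum _ fun e _ => (hce e).comp_edgeFlow pathE e).add
    (continuousOn_finsetSum _ fun v _ => ((hcv v).comp_edgeFlow pathV v).add continuousOn_const)

variable [Fintype E] [Fintype V]

theorem potential_eq_loadPotential (f : P → ℝ) :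
    potential pathE pathV ce cv u f =
      loadPotential pathE ce f + loadPotential pathV cv f + ∑ p, f p * ∑ v ∈ pathV p, u v p :=
  rfl

theorem sum_sub_mul_pathCost_le_potential_sub (hce : ∀ e, MonotoneOn (ce e) (Icc 0 1))
    (hcv : ∀ v, MonotoneOn (cv v) (Icc 0 1)) {f g : P → ℝ} (hf : Feasible f) (hg : Feasible g) :
    ∑ p, (g p - f p) * pathCost pathE pathV ce cv u f p ≤
      potential pathE pathV ce cv u g - potential pathE pathV ce cv u f := by
  have hE := sum_sub_mul_le_loadPotential_sub pathE hce hf hg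
  have hV := sum_sub_mul_le_loadPotential_sub pathV hcv hf hg
  simp_rw [pathCost_eq, potential_eq_loadPotential, mul_add, sum_add_distrib]
  simp only [sub_mul, sum_sub_distrib] at *
  linarith

variable {pathE pathV ce cv u}

theorem IsWardrop.potential_le (hce : ∀ e, MonotoneOn (ce e) (Icc 0 1))
    (hcv : ∀ v, MonotoneOn (cv v) (Icc 0 1)) {f g : P → ℝ}
    (hW : IsWardrop pathE pathV ce cv u f) (hf : Feasible f) (hg : Feasible g) :
    potential pathE pathV ce cv u f ≤ potential pathE pathV ce cv u g := by
  have hvi := sum_mul_le_sum_mul_of_pos_imp_le hf hg hW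
  have hgrad := sum_sub_mul_pathCost_le_potential_sub pathE pathV ce cv u hce hcv hf hg
  simp only [sub_mul, sum_sub_distrib] at hgrad
  linarith

theorem isWardrop_of_forall_potential_le (hce_cont : ∀ e, ContinuousOn (ce e) (Icc 0 1))
    (hce_mono : ∀ e, MonotoneOn (ce e) (Icc 0 1)) (hcv_cont : ∀ v, ContinuousOn (cv v) (Icc 0 1))
    (hcv_mono : ∀ v, MonotoneOn (cv v) (Icc 0 1)) {f : P → ℝ} (hf : Feasible f)
    (hmin : ∀ g, Feasible g → potential pathE pathV ce cv u f ≤ potential pathE pathV ce cv u g) :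
    IsWardrop pathE pathV ce cv u f := by
  classical
  intro p q hp
  by_contra! hqp
  have hpq : p ≠ q := by rintro rfl; exact hqp.false
  set G := shiftFlow f p q
  have hG : ∀ t ∈ Icc 0 (f p), Feasible (G t) := fun t ht => hf.shiftFlow hpq ht
  set gap := fun t => pathCost pathE pathV ce cv u (G t) p - pathCost pathE pathV ce cv u (G t) q
  have hcost := fun r => continuousOn_comp_shiftFlow
    (continuousOn_pathCost pathE pathV ce cv u hce_cont hcv_cont r) hf hpq
  have hgap : ContinuousWithinAt gap (Ioc 0 (f p)) 0 :=
    (((hcost p).sub (hcost q)) 0 ⟨le_rfl, hp.le⟩).mono Ioc_subset_Icc_self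
  have : (nhdsWithin (0 : ℝ) (Ioc 0 (f p))).NeBot := left_nhdsWithin_Ioc_neBot hp
  have hgap0 : 0 < gap 0 := by simpa [gap, G] using hqp
  obtain ⟨t, ht_gap, ht⟩ := ((hgap.eventually (lt_mem_nhds hgap0)).and self_mem_nhdsWithin).exists
  have hdesc := sum_sub_mul_pathCost_le_potential_sub pathE pathV ce cv u hce_mono hcv_mono
    (hG t (Ioc_subset_Icc_self ht)) hf
  rw [sum_sub_shiftFlow_mul] at hdesc
  linarith [hmin (G t) (hG t (Ioc_subset_Icc_self ht)), mul_pos ht.1 ht_gap]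

end Potential

section RoutingGame

variable {E V P : Type*} [Fintype E] [Fintype V] [Fintype P] [Nonempty P]
  [DecidableEq E] [DecidableEq V]

theorem isWardrop_iff_minimizes_potential_general
    (pathE : P → Finset E) (pathV : P → Finset V)
    (ce : E → ℝ → ℝ) (cv : V → ℝ → ℝ) (u : V → P → ℝ)
    (hce_cont : ∀ e, ContinuousOn (ce e) (Set.Icc (0:ℝ) 1))
    (hce_mono : ∀ e, MonotoneOn (ce e) (Set.Icc (0:ℝ) 1))
    (hcv_cont : ∀ v, ContinuousOn (cv v) (Set.Icc (0:ℝ) 1))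
    (hcv_mono : ∀ v, MonotoneOn (cv v) (Set.Icc (0:ℝ) 1))
    (f : P → ℝ) (hf : Feasible f) :
    IsWardrop pathE pathV ce cv u f ↔
      ∀ g : P → ℝ, Feasible g →
        potential pathE pathV ce cv u f ≤ potential pathE pathV ce cv u g :=
  ⟨fun hW _ hg => hW.potential_le hce_mono hcv_mono hf hg,
    isWardrop_of_forall_potential_le hce_cont hce_mono hcv_cont hcv_mono hf⟩

/-- **Proposition 1, Potential Function.** For a given incentive profile `u`,
a feasible flow `f` is a Wardrop equilibrium iff it minimizes `Φ(·,u)` over the feasible set. -/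
theorem isWardrop_iff_minimizes_potential
    (pathE : P → Finset E) (pathV : P → Finset V)
    (ce : E → ℝ → ℝ) (cv : V → ℝ → ℝ) (u : V → P → ℝ)
    (hce_nn : ∀ e, ∀ x ∈ Set.Icc (0:ℝ) 1, 0 ≤ ce e x)
    (hce_cont : ∀ e, ContinuousOn (ce e) (Set.Icc (0:ℝ) 1))
    (hce_mono : ∀ e, MonotoneOn (ce e) (Set.Icc (0:ℝ) 1))
    (hcv_nn : ∀ v, ∀ x ∈ Set.Icc (0:ℝ) 1, 0 ≤ cv v x)
    (hcv_cont : ∀ v, ContinuousOn (cv v) (Set.Icc (0:ℝ) 1))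
    (hcv_mono : ∀ v, MonotoneOn (cv v) (Set.Icc (0:ℝ) 1))
    (f : P → ℝ) (hf : Feasible f) :
    IsWardrop pathE pathV ce cv u f ↔
      ∀ g : P → ℝ, Feasible g →
        potential pathE pathV ce cv u f ≤ potential pathE pathV ce cv u g :=
  isWardrop_iff_minimizes_potential_general pathE pathV ce cv u hce_cont hce_mono hcv_cont hcv_mono
    f hf

end RoutingGame
end

section
/- (Theorem 1, Existence.) For any given incentive profile u, a routing game with path-specific node costs whose edge costs and base node costs are nonnegative, continuous, and nondecreasing admits at least one Wardrop equilibrium flow. -/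
open Set MeasureTheory intervalIntegral

section RoutingGame

variable {E V P : Type*} [Fintype E] [Fintype V] [Fintype P] [Nonempty P]
  [DecidableEq E] [DecidableEq V]

/- ### Auxiliary lemmas -/

lemma aux_nodeFlow_eq (pa : P → Finset V) (f : P → ℝ) (v : V) :
    nodeFlow pa f v = edgeFlow pa f v := rfl

lemma aux_integral_le (g : ℝ → ℝ) {x y : ℝ} (hm : MonotoneOn g (Icc 0 1))
    (hx : 0 ≤ x) (hxy : x ≤ y) (hy : y ≤ 1) :
    ∫ s in x..y, g s ≤ (y - x) * g y := by
  have hsub : Set.uIcc x y ⊆ Icc 0 1 := by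
    rw [uIcc_of_le hxy]; exact Icc_subset_Icc hx hy
  have hint : IntervalIntegrable g volume x y := (hm.mono hsub).intervalIntegrable
  calc ∫ s in x..y, g s ≤ ∫ _s in x..y, g y := by
        apply intervalIntegral.integral_mono_on hxy hint intervalIntegrable_const
        intro t ht
        exact hm ⟨le_trans hx ht.1, le_trans ht.2 hy⟩ ⟨le_trans hx hxy, hy⟩ ht.2
    _ = (y - x) * g y := by simp [smul_eq_mul]

lemma aux_le_integral (g : ℝ → ℝ) {x y : ℝ} (hm : MonotoneOn g (Icc 0 1))
    (hx : 0 ≤ x) (hxy : x ≤ y) (hy : y ≤ 1) :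
    (y - x) * g x ≤ ∫ s in x..y, g s := by
  have hsub : Set.uIcc x y ⊆ Icc 0 1 := by
    rw [uIcc_of_le hxy]; exact Icc_subset_Icc hx hy
  have hint : IntervalIntegrable g volume x y := (hm.mono hsub).intervalIntegrable
  calc ((y - x) * g x) = ∫ _s in x..y, g x := by simp [smul_eq_mul]
    _ ≤ ∫ s in x..y, g s := by
        apply intervalIntegral.integral_mono_on hxy intervalIntegrable_const hint
        intro t ht
        exact hm ⟨hx, le_trans hxy hy⟩ ⟨le_trans hx ht.1, le_trans ht.2 hy⟩ ht.1

section AuxFlow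

set_option linter.unusedSectionVars false

variable {X : Type*} [Fintype X] [DecidableEq X]

lemma aux_flow_nonneg (pa : P → Finset X) {f : P → ℝ} (hf : ∀ r, 0 ≤ f r) (e : X) :
    0 ≤ edgeFlow pa f e :=
  Finset.sum_nonneg fun r _ => hf r

lemma aux_flow_le_one (pa : P → Finset X) {f : P → ℝ} (hf : f ∈ stdSimplex ℝ P) (e : X) :
    edgeFlow pa f e ≤ 1 := by
  calc edgeFlow pa f e ≤ ∑ r, f r :=
        Finset.sum_le_sum_of_subset_of_nonneg (Finset.filter_subset _ _)
          (fun r _ _ => hf.1 r)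
    _ = 1 := hf.2

lemma aux_flow_mem (pa : P → Finset X) {f : P → ℝ} (hf : f ∈ stdSimplex ℝ P) (e : X) :
    edgeFlow pa f e ∈ Icc (0:ℝ) 1 :=
  ⟨aux_flow_nonneg pa hf.1 e, aux_flow_le_one pa hf e⟩

lemma aux_le_flow (pa : P → Finset X) {f : P → ℝ} (hf : ∀ r, 0 ≤ f r) {e : X} {p : P}
    (h : e ∈ pa p) : f p ≤ edgeFlow pa f e :=
  Finset.single_le_sum (fun r _ => hf r)
    (by simp [Finset.mem_filter, h])

lemma aux_flow_le [DecidableEq P] (pa : P → Finset X) {f : P → ℝ}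
    (hf : f ∈ stdSimplex ℝ P) {e : X} {p : P}
    (h : e ∉ pa p) : edgeFlow pa f e ≤ 1 - f p := by
  have hsub : Finset.univ.filter (fun r => e ∈ pa r) ⊆ Finset.univ.erase p := by
    intro r hr
    rw [Finset.mem_filter] at hr
    refine Finset.mem_erase.2 ⟨?_, Finset.mem_univ r⟩
    rintro rfl; exact h hr.2
  calc edgeFlow pa f e ≤ ∑ r ∈ Finset.univ.erase p, f r :=
        Finset.sum_le_sum_of_subset_of_nonneg hsub (fun r _ _ => hf.1 r)
    _ = (∑ r, f r) - f p := Finset.sum_erase_eq_sub (Finset.mem_univ p)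
    _ = 1 - f p := by rw [hf.2]

lemma aux_flow_shift [DecidableEq P] (pa : P → Finset X) (f : P → ℝ) (p q : P) (ε : ℝ)
    (e : X) :
    edgeFlow pa (fun r => f r + (if r = q then ε else 0) - (if r = p then ε else 0)) e
      = edgeFlow pa f e + (if e ∈ pa q then ε else 0) - (if e ∈ pa p then ε else 0) := by
  unfold edgeFlow
  rw [Finset.sum_sub_distrib, Finset.sum_add_distrib, Finset.sum_ite_eq', Finset.sum_ite_eq']
  simp [Finset.mem_filter]

/-- Continuity of the primitive-sum part of the potential on the simplex. -/
lemma aux_sum_prim_cont (pa : P → Finset X) (c : X → ℝ → ℝ)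
    (hmono : ∀ e, MonotoneOn (c e) (Icc 0 1)) :
    ContinuousOn (fun f : P → ℝ => ∑ e, ∫ s in (0:ℝ)..(edgeFlow pa f e), c e s)
      (stdSimplex ℝ P) := by
  apply continuousOn_finset_sum
  intro e _
  have hmono' : MonotoneOn (c e) (uIcc (0:ℝ) 1) := by
    rw [uIcc_of_le zero_le_one]; exact hmono e
  have hint : IntervalIntegrable (c e) volume 0 1 := hmono'.intervalIntegrable
  have hprim : ContinuousOn (fun b => ∫ s in (0:ℝ)..b, c e s) (uIcc (0:ℝ) 1) :=
    intervalIntegral.continuousOn_primitive_interval' hint left_mem_uIcc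
  have hflow : Continuous (fun f : P → ℝ => edgeFlow pa f e) := by
    unfold edgeFlow
    exact continuous_finset_sum _ (fun r _ => continuous_apply r)
  refine hprim.comp hflow.continuousOn ?_
  intro f hf
  rw [uIcc_of_le zero_le_one]
  exact aux_flow_mem pa hf e

/-- The first-order bound term. -/
noncomputable def auxBump (pa : P → Finset X) (c : X → ℝ → ℝ) (f : P → ℝ) (p q : P)
    (ε : ℝ) : ℝ :=
  ∑ e, ((if e ∈ pa q ∧ e ∉ pa p then c e (edgeFlow pa f e + ε) else 0)
      - (if e ∈ pa p ∧ e ∉ pa q then c e (edgeFlow pa f e - ε) else 0))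

lemma aux_bump_bound [DecidableEq P] (pa : P → Finset X) (c : X → ℝ → ℝ)
    (hmono : ∀ e, MonotoneOn (c e) (Icc 0 1)) {f : P → ℝ} (hf : f ∈ stdSimplex ℝ P)
    (p q : P) {ε : ℝ} (hε : ε ∈ Ioo 0 (f p)) :
    (∑ e, ∫ s in (0:ℝ)..(edgeFlow pa
        (fun r => f r + (if r = q then ε else 0) - (if r = p then ε else 0)) e), c e s)
      - (∑ e, ∫ s in (0:ℝ)..(edgeFlow pa f e), c e s)
      ≤ ε * auxBump pa c f p q ε := by
  rw [← Finset.sum_sub_distrib, auxBump, Finset.mul_sum]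
  apply Finset.sum_le_sum
  intro e _
  have hx0 : 0 ≤ edgeFlow pa f e := aux_flow_nonneg pa hf.1 e
  have hx1 : edgeFlow pa f e ≤ 1 := aux_flow_le_one pa hf e
  set x := edgeFlow pa f e with hx
  rw [aux_flow_shift pa f p q ε e, ← hx]
  have hint01 : IntervalIntegrable (c e) volume 0 x :=
    ((hmono e).mono (by rw [uIcc_of_le hx0]; exact Icc_subset_Icc le_rfl hx1)).intervalIntegrable
  by_cases heq : e ∈ pa q <;> by_cases hep : e ∈ pa p
  · rw [if_pos heq, if_pos hep, if_neg (fun h => h.2 hep), if_neg (fun h => h.2 heq)]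
    simp
  · -- e ∈ pa q, e ∉ pa p : flow increases by ε
    have hub : x ≤ 1 - f p := aux_flow_le pa hf hep
    have h1 : x + ε ≤ 1 := by linarith [hε.2]
    have hint02 : IntervalIntegrable (c e) volume 0 (x + ε) :=
      ((hmono e).mono (by
        rw [uIcc_of_le (by linarith [hε.1] : (0:ℝ) ≤ x + ε)]
        exact Icc_subset_Icc le_rfl h1)).intervalIntegrable
    rw [if_pos heq, if_neg hep, if_pos ⟨heq, hep⟩, if_neg (fun h => hep h.1),
      sub_zero, sub_zero]
    rw [intervalIntegral.integral_interval_sub_left hint02 hint01]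
    calc ∫ s in x..(x + ε), c e s ≤ (x + ε - x) * c e (x + ε) :=
          aux_integral_le (c e) (hmono e) hx0 (by linarith [hε.1]) h1
      _ = ε * c e (x + ε) := by ring
  · -- e ∉ pa q, e ∈ pa p : flow decreases by ε
    have hlb : f p ≤ x := aux_le_flow pa hf.1 hep
    have h0 : 0 ≤ x - ε := by linarith [hε.2]
    have hint02 : IntervalIntegrable (c e) volume 0 (x - ε) :=
      ((hmono e).mono (by
        rw [uIcc_of_le h0]
        exact Icc_subset_Icc le_rfl (by linarith [hε.1]))).intervalIntegrable
    rw [if_neg heq, if_pos hep, if_neg (fun h => heq h.1), if_pos ⟨hep, heq⟩,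
      add_zero, zero_sub]
    rw [intervalIntegral.integral_interval_sub_left hint02 hint01]
    have hle : ((x - (x - ε)) * c e (x - ε)) ≤ ∫ s in (x - ε)..x, c e s :=
      aux_le_integral (c e) (hmono e) h0 (by linarith [hε.1]) hx1
    have heq2 : (x - (x - ε)) = ε := by ring
    rw [heq2] at hle
    calc ∫ s in x..(x - ε), c e s = -∫ s in (x - ε)..x, c e s :=
          intervalIntegral.integral_symm _ _
      _ ≤ -(ε * c e (x - ε)) := by linarith
      _ = ε * -c e (x - ε) := by ring
  · rw [if_neg heq, if_neg hep, if_neg (fun h => heq h.1), if_neg (fun h => hep h.1)]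
    simp

lemma aux_bump_tendsto (pa : P → Finset X) (c : X → ℝ → ℝ)
    (hcont : ∀ e, ContinuousOn (c e) (Icc 0 1)) {f : P → ℝ} (hf : f ∈ stdSimplex ℝ P)
    (p q : P) (hfp : 0 < f p) :
    Filter.Tendsto (auxBump pa c f p q) (nhdsWithin 0 (Ioi 0))
      (nhds ((∑ e ∈ pa q, c e (edgeFlow pa f e)) - ∑ e ∈ pa p, c e (edgeFlow pa f e))) := by
  classical
  have hmem : Ioo (0:ℝ) (f p) ∈ nhdsWithin (0:ℝ) (Ioi 0) :=
    Ioo_mem_nhdsGT_of_mem ⟨le_refl 0, hfp⟩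
  have key : ∀ e : X, Filter.Tendsto
      (fun ε => (if e ∈ pa q ∧ e ∉ pa p then c e (edgeFlow pa f e + ε) else 0)
        - (if e ∈ pa p ∧ e ∉ pa q then c e (edgeFlow pa f e - ε) else 0))
      (nhdsWithin 0 (Ioi 0))
      (nhds ((if e ∈ pa q ∧ e ∉ pa p then c e (edgeFlow pa f e) else 0)
        - (if e ∈ pa p ∧ e ∉ pa q then c e (edgeFlow pa f e) else 0))) := by
    intro e
    have hx0 : 0 ≤ edgeFlow pa f e := aux_flow_nonneg pa hf.1 e
    have hx1 : edgeFlow pa f e ≤ 1 := aux_flow_le_one pa hf e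
    set x := edgeFlow pa f e with hx
    apply Filter.Tendsto.sub
    · by_cases h : e ∈ pa q ∧ e ∉ pa p
      · simp only [h, if_true]
        have hub : x ≤ 1 - f p := aux_flow_le pa hf h.2
        have h1 : Filter.Tendsto (fun ε : ℝ => x + ε) (nhdsWithin 0 (Ioi 0))
            (nhdsWithin x (Icc 0 1)) := by
          rw [tendsto_nhdsWithin_iff]
          constructor
          · have h2 : Filter.Tendsto (fun ε : ℝ => x + ε) (nhds 0) (nhds x) := by
              have := (continuous_add_left x).tendsto (0:ℝ)
              simpa using this
            exact h2.mono_left nhdsWithin_le_nhds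
          · filter_upwards [hmem] with ε hε
            exact ⟨by linarith [hε.1], by linarith [hε.2]⟩
        exact ((hcont e x ⟨hx0, hx1⟩).tendsto).comp h1
      · simp only [h, if_false]
        exact tendsto_const_nhds
    · by_cases h : e ∈ pa p ∧ e ∉ pa q
      · simp only [h, if_true]
        have hlb : f p ≤ x := aux_le_flow pa hf.1 h.1
        have h1 : Filter.Tendsto (fun ε : ℝ => x - ε) (nhdsWithin 0 (Ioi 0))
            (nhdsWithin x (Icc 0 1)) := by
          rw [tendsto_nhdsWithin_iff]
          constructor
          · have h2 : Filter.Tendsto (fun ε : ℝ => x - ε) (nhds 0) (nhds x) := by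
              have := (continuous_const.sub continuous_id :
                Continuous fun ε : ℝ => x - ε).tendsto (0:ℝ)
              exact (continuous_sub_left x).tendsto' 0 x (by simp)
            exact h2.mono_left nhdsWithin_le_nhds
          · filter_upwards [hmem] with ε hε
            exact ⟨by linarith [hε.2], by linarith [hε.1]⟩
        exact ((hcont e x ⟨hx0, hx1⟩).tendsto).comp h1
      · simp only [h, if_false]
        exact tendsto_const_nhds
  have hmain : Filter.Tendsto (auxBump pa c f p q) (nhdsWithin 0 (Ioi 0))
      (nhds (∑ e, ((if e ∈ pa q ∧ e ∉ pa p then c e (edgeFlow pa f e) else 0)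
        - (if e ∈ pa p ∧ e ∉ pa q then c e (edgeFlow pa f e) else 0)))) := by
    unfold auxBump
    exact tendsto_finset_sum _ (fun e _ => key e)
  have hval : (∑ e, ((if e ∈ pa q ∧ e ∉ pa p then c e (edgeFlow pa f e) else 0)
        - (if e ∈ pa p ∧ e ∉ pa q then c e (edgeFlow pa f e) else 0)))
      = (∑ e ∈ pa q, c e (edgeFlow pa f e)) - ∑ e ∈ pa p, c e (edgeFlow pa f e) := by
    rw [Finset.sum_sub_distrib]
    have h1 : (∑ e, (if e ∈ pa q ∧ e ∉ pa p then c e (edgeFlow pa f e) else 0))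
        = ∑ e ∈ pa q \ pa p, c e (edgeFlow pa f e) := by
      simp only [← Finset.mem_sdiff]
      rw [Finset.sum_ite_mem, Finset.univ_inter]
    have h2 : (∑ e, (if e ∈ pa p ∧ e ∉ pa q then c e (edgeFlow pa f e) else 0))
        = ∑ e ∈ pa p \ pa q, c e (edgeFlow pa f e) := by
      simp only [← Finset.mem_sdiff]
      rw [Finset.sum_ite_mem, Finset.univ_inter]
    rw [h1, h2, Finset.sum_sdiff_sub_sum_sdiff]
  rw [← hval]
  exact hmain

end AuxFlow

/-- **Theorem 1, Existence.** For any given incentive profile `u`, a routing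
game with path-specific node costs (nonnegative, continuous, nondecreasing costs) admits
at least one Wardrop equilibrium flow. -/
theorem exists_wardrop_equilibrium
    (pathE : P → Finset E) (pathV : P → Finset V)
    (ce : E → ℝ → ℝ) (cv : V → ℝ → ℝ) (u : V → P → ℝ)
    (hce_nn : ∀ e, ∀ x ∈ Set.Icc (0:ℝ) 1, 0 ≤ ce e x)
    (hce_cont : ∀ e, ContinuousOn (ce e) (Set.Icc (0:ℝ) 1))
    (hce_mono : ∀ e, MonotoneOn (ce e) (Set.Icc (0:ℝ) 1))
    (hcv_nn : ∀ v, ∀ x ∈ Set.Icc (0:ℝ) 1, 0 ≤ cv v x)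
    (hcv_cont : ∀ v, ContinuousOn (cv v) (Set.Icc (0:ℝ) 1))
    (hcv_mono : ∀ v, MonotoneOn (cv v) (Set.Icc (0:ℝ) 1))
 :
    ∃ f : P → ℝ, Feasible f ∧ IsWardrop pathE pathV ce cv u f := by
  classical
  -- continuity of the potential on the simplex
  have hcontPhi : ContinuousOn (potential pathE pathV ce cv u) (stdSimplex ℝ P) := by
    unfold potential
    simp only [aux_nodeFlow_eq]
    refine ContinuousOn.add (ContinuousOn.add ?_ ?_) ?_
    · exact aux_sum_prim_cont pathE ce hce_mono
    · exact aux_sum_prim_cont pathV cv hcv_mono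
    · apply Continuous.continuousOn
      exact continuous_finset_sum _ (fun r _ => (continuous_apply r).mul continuous_const)
  have hne : (stdSimplex ℝ P).Nonempty :=
    ⟨_, ite_eq_mem_stdSimplex ℝ (Classical.arbitrary P)⟩
  obtain ⟨f, hfS, hmin⟩ := (isCompact_stdSimplex ℝ P).exists_isMinOn hne hcontPhi
  refine ⟨f, hfS, ?_⟩
  intro p q hfp
  by_cases hpq : p = q
  · subst hpq; exact le_rfl
  have key : ∀ ε ∈ Ioo 0 (f p),
      0 ≤ auxBump pathE ce f p q ε + auxBump pathV cv f p q ε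
        + ((∑ v ∈ pathV q, u v q) - (∑ v ∈ pathV p, u v p)) := by
    intro ε hε
    set g : P → ℝ := fun r => f r + (if r = q then ε else 0) - (if r = p then ε else 0)
      with hg
    have hgS : g ∈ stdSimplex ℝ P := by
      constructor
      · intro r
        by_cases hr : r = p
        · subst hr
          simp only [hg, if_neg hpq, if_pos rfl, ite_true, if_true, add_zero]
          linarith [hε.2]
        · simp only [hg, if_neg hr, sub_zero]
          split_ifs with h2
          · linarith [hfS.1 r, hε.1]
          · simpa using hfS.1 r
      · simp only [hg]
        rw [Finset.sum_sub_distrib, Finset.sum_add_distrib,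
          Finset.sum_ite_eq' Finset.univ q (fun _ => ε),
          Finset.sum_ite_eq' Finset.univ p (fun _ => ε)]
        simp [hfS.2]
    have h0 : potential pathE pathV ce cv u f ≤ potential pathE pathV ce cv u g :=
      hmin hgS
    have hlin : (∑ r, g r * ∑ v ∈ pathV r, u v r)
        = (∑ r, f r * ∑ v ∈ pathV r, u v r)
          + ε * (∑ v ∈ pathV q, u v q) - ε * (∑ v ∈ pathV p, u v p) := by
      simp only [hg]
      simp only [add_mul, sub_mul, ite_mul, zero_mul]
      rw [Finset.sum_sub_distrib, Finset.sum_add_distrib,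
        Finset.sum_ite_eq' Finset.univ q (fun r => ε * ∑ v ∈ pathV r, u v r),
        Finset.sum_ite_eq' Finset.univ p (fun r => ε * ∑ v ∈ pathV r, u v r)]
      simp
    have hE := aux_bump_bound pathE ce hce_mono hfS p q hε
    have hV := aux_bump_bound pathV cv hcv_mono hfS p q hε
    rw [← hg] at hE hV
    unfold potential at h0
    simp only [aux_nodeFlow_eq] at h0
    rw [hlin] at h0
    have hεpos : (0:ℝ) < ε := hε.1
    by_contra hcon
    push_neg at hcon
    nlinarith [hE, hV, h0, mul_pos hεpos (neg_pos.2 hcon)]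
  have hval : pathCost pathE pathV ce cv u f q - pathCost pathE pathV ce cv u f p
      = ((∑ e ∈ pathE q, ce e (edgeFlow pathE f e))
          - ∑ e ∈ pathE p, ce e (edgeFlow pathE f e))
        + ((∑ v ∈ pathV q, cv v (edgeFlow pathV f v))
          - ∑ v ∈ pathV p, cv v (edgeFlow pathV f v))
        + ((∑ v ∈ pathV q, u v q) - (∑ v ∈ pathV p, u v p)) := by
    unfold pathCost
    simp only [aux_nodeFlow_eq]
    rw [Finset.sum_add_distrib, Finset.sum_add_distrib]
    ring
  have hlim : Filter.Tendsto
      (fun ε => auxBump pathE ce f p q ε + auxBump pathV cv f p q ε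
        + ((∑ v ∈ pathV q, u v q) - (∑ v ∈ pathV p, u v p)))
      (nhdsWithin 0 (Ioi 0))
      (nhds (pathCost pathE pathV ce cv u f q - pathCost pathE pathV ce cv u f p)) := by
    rw [hval]
    exact ((aux_bump_tendsto pathE ce hce_cont hfS p q hfp).add
      (aux_bump_tendsto pathV cv hcv_cont hfS p q hfp)).add tendsto_const_nhds
  have hfinal : 0 ≤ pathCost pathE pathV ce cv u f q - pathCost pathE pathV ce cv u f p := by
    apply ge_of_tendsto hlim
    filter_upwards [Ioo_mem_nhdsGT_of_mem (⟨le_refl (0:ℝ), hfp⟩ : (0:ℝ) ∈ Ico 0 (f p))]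
      with ε hε using key ε hε
  linarith


end RoutingGame
end

section
/- (Worst-case reduction.) For any given incentive profile u (edge and base node costs nonnegative, continuous, nondecreasing), the supremum of the social cost C(f,u) over all Wardrop equilibrium flows f equals its infimum over all Wardrop equilibrium flows; hence the worst-case equilibrium social cost in the incentive design problem equals the social cost of any single equilibrium flow. -/
/-!
For two Wardrop equilibria `f` and `g`, each satisfies the variational inequality against the
other, so `∑ p, (f p - g p) * (c_p(f) - c_p(g)) ≤ 0`. The incentives cancel in this pairing, and
regrouped by edges and nodes it becomes `∑ e, (c_e(f_e) - c_e(g_e)) * (f_e - g_e)` plus the node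
analogue, a sum of nonnegative terms because the costs are nondecreasing. Hence every edge and
node cost, and so every path cost, is the same at all equilibria, and then the variational
inequalities give equal social costs. The set of equilibrium social costs thus has at most one
element, so its supremum and infimum agree.
-/

open Set MeasureTheory intervalIntegral

section Flows

variable {ι κ : Type*} [Fintype ι]

lemma Feasible.sum_mem_Icc_s13 {f : ι → ℝ} (hf : Feasible f) (s : Finset ι) :
    ∑ i ∈ s, f i ∈ Icc (0 : ℝ) 1 :=
  ⟨Finset.sum_nonneg fun i _ => hf.1 i,
    hf.2 ▸ Finset.sum_le_sum_of_subset_of_nonneg (Finset.subset_univ s) fun i _ _ => hf.1 i⟩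

/-- The variational inequality: a flow supported on cheapest paths minimises the total cost
`∑ i, g i * c i` over feasible `g`. -/
lemma Feasible.sum_mul_le_sum_mul_s13 {f g c : ι → ℝ} (hf : Feasible f) (hg : Feasible g)
    (hmin : ∀ i j, 0 < f i → c i ≤ c j) :
    ∑ i, f i * c i ≤ ∑ i, g i * c i := by
  obtain ⟨i₀, hi₀⟩ : ∃ i, 0 < f i := by
    by_contra! h
    have : ∑ i, f i = 0 := Finset.sum_eq_zero fun i _ => le_antisymm (h i) (hf.1 i)
    exact zero_ne_one (this.symm.trans hf.2)
  calc ∑ i, f i * c i ≤ ∑ i, f i * c i₀ := Finset.sum_le_sum fun i _ => by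
        rcases (hf.1 i).lt_or_eq with hi | hi
        · exact mul_le_mul_of_nonneg_left (hmin i i₀ hi) hi.le
        · simp [← hi]
    _ = ∑ i, g i * c i₀ := by rw [← Finset.sum_mul, ← Finset.sum_mul, hf.2, hg.2]
    _ ≤ ∑ i, g i * c i :=
        Finset.sum_le_sum fun i _ => mul_le_mul_of_nonneg_left (hmin i₀ i hi₀) (hg.1 i)

lemma sum_mul_sum_eq_sum_mul_sum_filter [Fintype κ] [DecidableEq κ] (s : ι → Finset κ)
    (h : ι → ℝ) (a : κ → ℝ) :
    ∑ i, h i * ∑ k ∈ s i, a k = ∑ k, a k * ∑ i ∈ Finset.univ.filter (fun i => k ∈ s i), h i := by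
  simp_rw [Finset.mul_sum]
  rw [Finset.sum_comm' (t' := Finset.univ) (s' := fun k => Finset.univ.filter (fun i => k ∈ s i))
    (fun i k => by simp)]
  exact Finset.sum_congr rfl fun k _ => Finset.sum_congr rfl fun i _ => mul_comm _ _

end Flows

section Equilibria

variable {E V P : Type*} [Fintype P] [DecidableEq E] [DecidableEq V]
  (pathE : P → Finset E) (pathV : P → Finset V) (ce : E → ℝ → ℝ) (cv : V → ℝ → ℝ)
  (u : V → P → ℝ)

lemma IsWardrop.socialCost_le {f g : P → ℝ} (hf : Feasible f)
    (hW : IsWardrop pathE pathV ce cv u f) (hg : Feasible g) :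
    socialCost pathE pathV ce cv u f ≤ ∑ p, g p * pathCost pathE pathV ce cv u f p :=
  hf.sum_mul_le_sum_mul_s13 hg hW

lemma pathCost_sub_pathCost (f g : P → ℝ) (p : P) :
    pathCost pathE pathV ce cv u f p - pathCost pathE pathV ce cv u g p =
      ∑ e ∈ pathE p, (ce e (edgeFlow pathE f e) - ce e (edgeFlow pathE g e)) +
        ∑ v ∈ pathV p, (cv v (nodeFlow pathV f v) - cv v (nodeFlow pathV g v)) := by
  simp only [pathCost, Finset.sum_sub_distrib, Finset.sum_add_distrib]
  ring

lemma sum_sub_mul_pathCost_sub [Fintype E] [Fintype V] (f g : P → ℝ) :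
    ∑ p, (f p - g p) * (pathCost pathE pathV ce cv u f p - pathCost pathE pathV ce cv u g p) =
      ∑ e, (ce e (edgeFlow pathE f e) - ce e (edgeFlow pathE g e)) *
          (edgeFlow pathE f e - edgeFlow pathE g e) +
        ∑ v, (cv v (nodeFlow pathV f v) - cv v (nodeFlow pathV g v)) *
          (nodeFlow pathV f v - nodeFlow pathV g v) := by
  simp_rw [pathCost_sub_pathCost, mul_add, Finset.sum_add_distrib,
    sum_mul_sum_eq_sum_mul_sum_filter, Finset.sum_sub_distrib]
  rfl

lemma IsWardrop.sum_sub_mul_pathCost_sub_nonpos {f g : P → ℝ} (hf : Feasible f)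
    (hWf : IsWardrop pathE pathV ce cv u f) (hg : Feasible g)
    (hWg : IsWardrop pathE pathV ce cv u g) :
    ∑ p, (f p - g p) * (pathCost pathE pathV ce cv u f p - pathCost pathE pathV ce cv u g p)
      ≤ 0 := by
  have hvi₁ := hWf.socialCost_le pathE pathV ce cv u hf hg
  have hvi₂ := hWg.socialCost_le pathE pathV ce cv u hg hf
  unfold socialCost at hvi₁ hvi₂
  simp only [sub_mul, mul_sub, Finset.sum_sub_distrib]
  linarith

lemma MonotoneOn.sub_mul_sub_nonneg' {s : Set ℝ} {c : ℝ → ℝ} (hc : MonotoneOn c s) {x y : ℝ}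
    (hx : x ∈ s) (hy : y ∈ s) : 0 ≤ (c x - c y) * (x - y) :=
  (monovaryOn_id_iff.2 hc).sub_mul_sub_nonneg hy hx

lemma IsWardrop.pathCost_eq [Fintype E] [Fintype V]
    (hce : ∀ e, MonotoneOn (ce e) (Icc 0 1)) (hcv : ∀ v, MonotoneOn (cv v) (Icc 0 1))
    {f g : P → ℝ} (hf : Feasible f) (hWf : IsWardrop pathE pathV ce cv u f)
    (hg : Feasible g) (hWg : IsWardrop pathE pathV ce cv u g) :
    pathCost pathE pathV ce cv u f = pathCost pathE pathV ce cv u g := by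
  have hpairing := hWf.sum_sub_mul_pathCost_sub_nonpos pathE pathV ce cv u hf hg hWg
  rw [sum_sub_mul_pathCost_sub] at hpairing
  have hE e : 0 ≤ (ce e (edgeFlow pathE f e) - ce e (edgeFlow pathE g e)) *
      (edgeFlow pathE f e - edgeFlow pathE g e) :=
    (hce e).sub_mul_sub_nonneg' (hf.sum_mem_Icc_s13 _) (hg.sum_mem_Icc_s13 _)
  have hV v : 0 ≤ (cv v (nodeFlow pathV f v) - cv v (nodeFlow pathV g v)) *
      (nodeFlow pathV f v - nodeFlow pathV g v) :=
    (hcv v).sub_mul_sub_nonneg' (hf.sum_mem_Icc_s13 _) (hg.sum_mem_Icc_s13 _)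
  have hEsum := Finset.sum_nonneg fun e (_ : e ∈ Finset.univ) => hE e
  have hVsum := Finset.sum_nonneg fun v (_ : v ∈ Finset.univ) => hV v
  have hE0 := (Finset.sum_eq_zero_iff_of_nonneg fun e _ => hE e).1 (by linarith)
  have hV0 := (Finset.sum_eq_zero_iff_of_nonneg fun v _ => hV v).1 (by linarith)
  have cost_eq {c : ℝ → ℝ} {x y : ℝ} (h : (c x - c y) * (x - y) = 0) : c x - c y = 0 := by
    rcases mul_eq_zero.1 h with h | h
    · exact h
    · rw [sub_eq_zero.1 h, sub_self]
  funext p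
  rw [← sub_eq_zero, pathCost_sub_pathCost,
    Finset.sum_eq_zero fun e _ => cost_eq (hE0 e (Finset.mem_univ e)),
    Finset.sum_eq_zero fun v _ => cost_eq (hV0 v (Finset.mem_univ v)), add_zero]

lemma IsWardrop.socialCost_eq [Fintype E] [Fintype V]
    (hce : ∀ e, MonotoneOn (ce e) (Icc 0 1)) (hcv : ∀ v, MonotoneOn (cv v) (Icc 0 1))
    {f g : P → ℝ} (hf : Feasible f) (hWf : IsWardrop pathE pathV ce cv u f)
    (hg : Feasible g) (hWg : IsWardrop pathE pathV ce cv u g) :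
    socialCost pathE pathV ce cv u f = socialCost pathE pathV ce cv u g := by
  have hcost := hWf.pathCost_eq pathE pathV ce cv u hce hcv hf hg hWg
  have hvi₁ := hWf.socialCost_le pathE pathV ce cv u hf hg
  have hvi₂ := hWg.socialCost_le pathE pathV ce cv u hg hf
  rw [hcost] at hvi₁
  rw [← hcost] at hvi₂
  exact le_antisymm hvi₁ hvi₂

end Equilibria

section RoutingGame

variable {E V P : Type*} [Fintype E] [Fintype V] [Fintype P] [Nonempty P]
  [DecidableEq E] [DecidableEq V]

theorem worst_case_equilibrium_reduction_general
    (pathE : P → Finset E) (pathV : P → Finset V)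
    (ce : E → ℝ → ℝ) (cv : V → ℝ → ℝ) (u : V → P → ℝ)
    (hce_mono : ∀ e, MonotoneOn (ce e) (Set.Icc (0:ℝ) 1))
    (hcv_mono : ∀ v, MonotoneOn (cv v) (Set.Icc (0:ℝ) 1))
 :
    sSup (socialCost pathE pathV ce cv u ''
        {f : P → ℝ | Feasible f ∧ IsWardrop pathE pathV ce cv u f}) =
      sInf (socialCost pathE pathV ce cv u ''
        {f : P → ℝ | Feasible f ∧ IsWardrop pathE pathV ce cv u f}) ∧
    ∀ f : P → ℝ, Feasible f → IsWardrop pathE pathV ce cv u f →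
      socialCost pathE pathV ce cv u f =
        sSup (socialCost pathE pathV ce cv u ''
          {g : P → ℝ | Feasible g ∧ IsWardrop pathE pathV ce cv u g}) := by
  set S := socialCost pathE pathV ce cv u ''
    {f : P → ℝ | Feasible f ∧ IsWardrop pathE pathV ce cv u f}
  have hS : S.Subsingleton := by
    rintro _ ⟨f, ⟨hf, hWf⟩, rfl⟩ _ ⟨g, ⟨hg, hWg⟩, rfl⟩
    exact hWf.socialCost_eq pathE pathV ce cv u hce_mono hcv_mono hf hg hWg
  refine ⟨?_, fun f hf hWf => ?_⟩
  · rcases hS.eq_empty_or_singleton with hempty | ⟨c, hsingleton⟩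
    · -- no equilibrium: both sides are the junk value `0`
      rw [hempty, Real.sSup_empty, Real.sInf_empty]
    · rw [hsingleton, csSup_singleton, csInf_singleton]
  · rw [hS.eq_singleton_of_mem (mem_image_of_mem _ ⟨hf, hWf⟩), csSup_singleton]

/-- **Worst-case reduction.** The supremum of the social cost over Wardrop
equilibrium flows equals its infimum; hence the worst-case equilibrium social cost equals
the social cost of any single equilibrium flow. -/
theorem worst_case_equilibrium_reduction
    (pathE : P → Finset E) (pathV : P → Finset V)
    (ce : E → ℝ → ℝ) (cv : V → ℝ → ℝ) (u : V → P → ℝ)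
    (hce_nn : ∀ e, ∀ x ∈ Set.Icc (0:ℝ) 1, 0 ≤ ce e x)
    (hce_cont : ∀ e, ContinuousOn (ce e) (Set.Icc (0:ℝ) 1))
    (hce_mono : ∀ e, MonotoneOn (ce e) (Set.Icc (0:ℝ) 1))
    (hcv_nn : ∀ v, ∀ x ∈ Set.Icc (0:ℝ) 1, 0 ≤ cv v x)
    (hcv_cont : ∀ v, ContinuousOn (cv v) (Set.Icc (0:ℝ) 1))
    (hcv_mono : ∀ v, MonotoneOn (cv v) (Set.Icc (0:ℝ) 1))
 :
    sSup (socialCost pathE pathV ce cv u ''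
        {f : P → ℝ | Feasible f ∧ IsWardrop pathE pathV ce cv u f}) =
      sInf (socialCost pathE pathV ce cv u ''
        {f : P → ℝ | Feasible f ∧ IsWardrop pathE pathV ce cv u f}) ∧
    ∀ f : P → ℝ, Feasible f → IsWardrop pathE pathV ce cv u f →
      socialCost pathE pathV ce cv u f =
        sSup (socialCost pathE pathV ce cv u ''
          {g : P → ℝ | Feasible g ∧ IsWardrop pathE pathV ce cv u g}) :=
  worst_case_equilibrium_reduction_general pathE pathV ce cv u hce_mono hcv_mono

end RoutingGame
end

section
/- In the Braess network with quadratic cost c(x) = x − x²/2 and incentives u_v^{p2} = u_w^{p2} = 0.2 (all other incentives zero), the flow f = (f_{p1}, f_{p2}, f_{p3}) = (1/2, 0, 1/2) is a Wardrop equilibrium: paths p1 and p3 each have cost 15/8 while path p2 has cost 43/20 ≥ 15/8, and the social cost equals 15/8. -/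
/-- Quadratic latency `c(x) = x - x²/2` on edges `e1` and `e4` of the Braess network. -/
noncomputable def c (x : ℝ) : ℝ := x - x^2/2

/-- Path costs in the Braess network (paths `p1, p2, p3` indexed by `Fin 3`), with
incentives `uv2` at node `v` and `uw2` at node `w` applied to path `p2` (all other
incentives zero).  Edge flows: `f_{e1} = f_v = f 0 + f 1`, `f_{e4} = f_w = f 1 + f 2`;
edges `e2`, `e3` have constant cost `1`, edge `e5` has cost `0`; base node costs
`c_v(x) = c_w(x) = x`. -/
noncomputable def cost (uv2 uw2 : ℝ) (f : Fin 3 → ℝ) : Fin 3 → ℝ :=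
  ![ c (f 0 + f 1) + 1 + (f 0 + f 1),
     c (f 0 + f 1) + 0 + c (f 1 + f 2) + ((f 0 + f 1) + uv2) + ((f 1 + f 2) + uw2),
     1 + c (f 1 + f 2) + (f 1 + f 2) ]

def IsWardropEquilibrium {ι : Type*} (C f : ι → ℝ) : Prop :=
  ∀ i j, 0 < f i → C i ≤ C j

section EqualCostOnSupport

variable {ι : Type*} {C f : ι → ℝ} {m : ℝ}

theorem isWardropEquilibrium_of_eq_on_support (hused : ∀ i, f i ≠ 0 → C i = m)
    (hmin : ∀ j, m ≤ C j) : IsWardropEquilibrium C f := by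
  intro i j hi
  rw [hused i hi.ne']
  exact hmin j

theorem sum_mul_eq_of_eq_on_support [Fintype ι] (hused : ∀ i, f i ≠ 0 → C i = m) :
    ∑ i, f i * C i = m * ∑ i, f i := by
  rw [Finset.mul_sum]
  refine Finset.sum_congr rfl fun i _ => ?_
  by_cases hi : f i = 0
  · simp [hi]
  · rw [hused i hi, mul_comm]

end EqualCostOnSupport

theorem c_one_half : c (1/2) = 3/8 := by
  norm_num [c]

theorem cost_of_unused_middle_path (u w a b : ℝ) :
    cost u w ![a, 0, b] = ![c a + 1 + a, c a + c b + (a + u) + (b + w), 1 + c b + b] := by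
  ext i
  fin_cases i <;> simp [cost]

/-- In the quadratic Braess network with incentives
`u_v^{p2} = u_w^{p2} = 0.2`, the flow `(1/2, 0, 1/2)` is a Wardrop equilibrium: paths `p1`
and `p3` each have cost `15/8`, path `p2` has cost `43/20 ≥ 15/8`, and the social cost
equals `15/8`. -/
theorem braess_quadratic_incentivized_equilibrium :
    let f : Fin 3 → ℝ := ![1/2, 0, 1/2]
    (∀ i j : Fin 3, 0 < f i → cost 0.2 0.2 f i ≤ cost 0.2 0.2 f j) ∧
    cost 0.2 0.2 f 0 = 15/8 ∧ cost 0.2 0.2 f 2 = 15/8 ∧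
    cost 0.2 0.2 f 1 = 43/20 ∧ (15/8 : ℝ) ≤ 43/20 ∧
    (∑ i, f i * cost 0.2 0.2 f i) = 15/8 := by
  intro f
  have hcost : cost 0.2 0.2 f = ![15/8, 43/20, 15/8] := by
    rw [cost_of_unused_middle_path, c_one_half]
    norm_num
  have hused : ∀ i, f i ≠ 0 → cost 0.2 0.2 f i = 15/8 := by
    intro i
    rw [hcost]
    fin_cases i <;> simp [f]
  have hmin : ∀ j, (15/8 : ℝ) ≤ cost 0.2 0.2 f j := by
    intro j
    rw [hcost]
    fin_cases j <;> norm_num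
  refine ⟨isWardropEquilibrium_of_eq_on_support hused hmin, by simp [hcost], by simp [hcost],
    by simp [hcost], by norm_num, ?_⟩
  have htotal : ∑ i, f i = 1 := by
    rw [Fin.sum_univ_three]
    norm_num [f, Matrix.cons_val_two]
  rw [sum_mul_eq_of_eq_on_support hused, htotal, mul_one]
end
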